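/- Let α be a multi-index of length k and dimension ≤ n, and let p ∈ [n]. Then u_α(p) = 0 if and only if p = 0 or p is one of the indices in α. Moreover, if p ≠ 0 and p does not belong to α, then u_α(p) = p − #{ i ∈ α : i < p }. -/

import Mathlib

/-- The elementary coface `d_i^{(n+1)} : [n] → [n+1]` (monotonic injection omitting `i`):
`k ↦ k` for `k < i` and `k ↦ k+1` for `k ≥ i`. -/
def dMap (n i : ℕ) : Fin (n + 1) → Fin (n + 2) :=
  fun k => if (k : ℕ) < i then ⟨k, by omega⟩ else ⟨(k : ℕ) + 1, by omega⟩

/-- The elementary quasi-codegeneracy `u_i^{(n)} : [n+1] → [n]`: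
`u_i 0 = u_i i = 0`, `u_i k = k` for `1 ≤ k ≤ i-1`, and `u_i k = k-1` for `k > i`. -/
def uMap (n i : ℕ) : Fin (n + 2) → Fin (n + 1) :=
  fun k => if (k : ℕ) = 0 ∨ (k : ℕ) = i then 0
    else if h : (k : ℕ) < i ∧ (k : ℕ) < n + 1 then ⟨k, h.2⟩
    else ⟨(k : ℕ) - 1, by omega⟩

/-- A function `f : [n] → [m]` is quasi-monotonic if `f 0 = 0` and `f` is strictly
monotonic outside the preimage of `0`. -/
def QuasiMonotonic {n m : ℕ} (f : Fin (n + 1) → Fin (m + 1)) : Prop :=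
  f 0 = 0 ∧ ∀ p q : Fin (n + 1), p < q → f p ≠ 0 → f q ≠ 0 → f p < f q

/-- A multi-index of dimension `≤ n`: a strictly increasing sequence of indices
`i_1 < … < i_k` with `1 ≤ i_p ≤ n` for all `p` (its length is `α.length`). -/
def IsMultiIndex (n : ℕ) (α : List ℕ) : Prop :=
  List.Chain' (· < ·) α ∧ ∀ i ∈ α, 1 ≤ i ∧ i ≤ n

/-- The quasi-codegeneracy `u_α = u_{i_1} ∘ u_{i_2} ∘ ⋯ ∘ u_{i_k} : [n] → [n-k]`
associated to a multi-index `α = (i_1, …, i_k)`; each elementary factor is taken at the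
appropriate dimension (`u_{i_k}` is applied first, at the highest dimension). -/
def uComp (n : ℕ) : (α : List ℕ) → α.length ≤ n → Fin (n + 1) → Fin (n - α.length + 1)
  | [], _ => fun k => k
  | i :: rest, h => fun k =>
      Fin.cast (by simp only [List.length_cons] at h ⊢; omega)
        (uMap (n - rest.length - 1) i
          (Fin.cast (by simp only [List.length_cons] at h; omega)
            (uComp n rest (by simp only [List.length_cons] at h; omega) k)))

/-- The coface `d_α = d_{i_k} ∘ d_{i_{k-1}} ∘ ⋯ ∘ d_{i_1} : [n-k] → [n]`
associated to a multi-index `α = (i_1, …, i_k)`; each elementary factor is taken at the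
appropriate dimension (`d_{i_1}` is applied first, at the lowest dimension). -/
def dComp (n : ℕ) : (α : List ℕ) → α.length ≤ n → Fin (n - α.length + 1) → Fin (n + 1)
  | [], _ => fun k => k
  | i :: rest, h => fun k =>
      dComp n rest (by simp only [List.length_cons] at h; omega)
        (Fin.cast (by simp only [List.length_cons] at h; omega)
          (dMap (n - rest.length - 1) i
            (Fin.cast (by simp only [List.length_cons] at h ⊢; omega) k)))

/-!
The proof is an induction on `α = i :: rest`, peeling off the outermost factor `u_i`. By
induction `q := u_rest(p)` is `0` when `p = 0` or `p ∈ rest`, and `p - c` otherwise, where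
`c` counts the indices of `rest` below `p`. Every index of `rest` exceeds `i`, so if `p ≤ i`
then `c = 0` and `q = p`, which `u_i` kills exactly when `p = i`; if `p > i` the indices
counted by `c` lie strictly between `i` and `p`, so `q > i` and `u_i` lowers it by one,
which is the extra index `i < p` now counted.
-/

lemma length_le_of_nodup_of_forall_mem_Ioo {l : List ℕ} (hl : l.Nodup) {a b : ℕ}
    (h : ∀ x ∈ l, x ∈ Set.Ioo a b) : l.length ≤ b - a - 1 := by
  rw [← List.toFinset_card_of_nodup hl, ← Nat.card_Ioo]
  exact Finset.card_le_card fun x hx => by simpa using h x (List.mem_toFinset.mp hx)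

lemma val_uMap {n i : ℕ} (hi : i ≤ n + 1) (k : Fin (n + 2)) :
    (uMap n i k : ℕ) =
      if (k : ℕ) = 0 ∨ (k : ℕ) = i then 0 else if (k : ℕ) < i then (k : ℕ) else (k : ℕ) - 1 := by
  unfold uMap
  split_ifs <;> first | rfl | omega

lemma val_uComp_cons {n i : ℕ} {rest : List ℕ} (h : (i :: rest).length ≤ n)
    (hi : i ≤ n - rest.length) (p : Fin (n + 1)) :
    let q : ℕ := uComp n rest (by simp only [List.length_cons] at h; omega) p
    (uComp n (i :: rest) h p : ℕ) = if q = 0 ∨ q = i then 0 else if q < i then q else q - 1 := by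
  simp only [List.length_cons] at h
  simp only [uComp, Fin.val_cast]
  exact val_uMap (by omega) _

namespace IsMultiIndex

variable {n i : ℕ} {rest : List ℕ}

lemma tail (hα : IsMultiIndex n (i :: rest)) : IsMultiIndex n rest :=
  ⟨hα.1.tail, fun j hj => hα.2 j (List.mem_cons_of_mem i hj)⟩

lemma head_lt (hα : IsMultiIndex n (i :: rest)) : ∀ j ∈ rest, i < j :=
  (List.pairwise_cons.mp (List.isChain_iff_pairwise.mp hα.1)).1

lemma nodup {α : List ℕ} (hα : IsMultiIndex n α) : α.Nodup :=
  (List.isChain_iff_pairwise.mp hα.1).imp (fun h => h.ne)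

lemma head_le_sub_length (hα : IsMultiIndex n (i :: rest)) : i ≤ n - rest.length := by
  have := length_le_of_nodup_of_forall_mem_Ioo hα.tail.nodup (a := i) (b := n + 1)
    fun j hj => ⟨hα.head_lt j hj, Nat.lt_succ_of_le (hα.tail.2 j hj).2⟩
  have := (hα.2 i List.mem_cons_self).2
  omega

lemma length_filter_lt_lt {α : List ℕ} (hα : IsMultiIndex n α) {p : ℕ} (hp : p ≠ 0) :
    (α.filter (fun j => j < p)).length < p := by
  have := length_le_of_nodup_of_forall_mem_Ioo (hα.nodup.filter (fun j => j < p))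
    (a := 0) (b := p) fun j hj => by
      rw [List.mem_filter, decide_eq_true_eq] at hj
      exact ⟨(hα.2 j hj.1).1, hj.2⟩
  omega

lemma length_filter_tail_lt_le (hα : IsMultiIndex n (i :: rest)) (p : ℕ) :
    (rest.filter (fun j => j < p)).length ≤ p - i - 1 :=
  length_le_of_nodup_of_forall_mem_Ioo (hα.tail.nodup.filter _) fun j hj => by
    rw [List.mem_filter, decide_eq_true_eq] at hj
    exact ⟨hα.head_lt j hj.1, hj.2⟩

lemma filter_tail_lt_eq_nil (hα : IsMultiIndex n (i :: rest)) {p : ℕ} (hp : p ≤ i) :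
    rest.filter (fun j => j < p) = [] :=
  List.filter_eq_nil_iff.mpr fun j hj => by
    have := hα.head_lt j hj
    simp only [decide_eq_true_eq]
    omega

end IsMultiIndex

lemma val_uComp {n : ℕ} {α : List ℕ} (hα : IsMultiIndex n α) (h : α.length ≤ n)
    (p : Fin (n + 1)) :
    (uComp n α h p : ℕ) =
      if (p : ℕ) = 0 ∨ (p : ℕ) ∈ α then 0
      else (p : ℕ) - (α.filter (fun i => i < (p : ℕ))).length := by
  induction α with
  | nil => simp [uComp]
  | cons i rest ih =>
    rw [val_uComp_cons h hα.head_le_sub_length, ih hα.tail]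
    by_cases hp : (p : ℕ) = 0 ∨ (p : ℕ) ∈ rest
    · have hp' : (p : ℕ) = 0 ∨ (p : ℕ) ∈ i :: rest := hp.imp_right (List.mem_cons_of_mem i)
      rw [if_pos hp, if_pos hp', if_pos (Or.inl rfl)]
    · obtain ⟨hp0, hprest⟩ := not_or.mp hp
      simp only [List.mem_cons, hprest, or_false, List.filter_cons, decide_eq_true_eq]
      rcases Nat.lt_or_ge i (p : ℕ) with hip | hpi
      · have hc' := hα.length_filter_tail_lt_le p
        simp only [if_pos hip, List.length_cons]
        split_ifs <;> omega
      · simp only [if_neg (Nat.not_lt.mpr hpi), hα.filter_tail_lt_eq_nil hpi, List.length_nil]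
        split_ifs <;> omega

theorem uComp_values (n : ℕ) (α : List ℕ) (hmi : IsMultiIndex n α)
    (hlen : α.length ≤ n) (p : Fin (n + 1)) :
    (uComp n α hlen p = 0 ↔ (p : ℕ) = 0 ∨ (p : ℕ) ∈ α) ∧
    ((p : ℕ) ≠ 0 → (p : ℕ) ∉ α →
      (uComp n α hlen p : ℕ) = (p : ℕ) - (α.filter (fun i => i < (p : ℕ))).length) := by
  have hval := val_uComp hmi hlen p
  refine ⟨?_, fun hp0 hpα => by rw [hval, if_neg (not_or.mpr ⟨hp0, hpα⟩)]⟩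
  rw [← Fin.val_eq_zero_iff, hval]
  by_cases hp : (p : ℕ) = 0 ∨ (p : ℕ) ∈ α
  · simp only [hp, if_true]
  · have := hmi.length_filter_lt_lt (not_or.mp hp).1
    simp only [hp, if_false, iff_false]
    omega
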